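/- arXiv:2009.12159 — 2 statements merged into one kernel-verified Lean document; each statement's English description precedes it below -/
import Mathlib

section
/- Let $R$ be a commutative ring, $I \subseteq R$ an ideal, and $a_{ij} \in R$ for $i,j$ in a finite index set, with $\bar a_{ij} \in I$ whenever $i \leq j$. If $i_1, \dots, i_k$ is a cyclic sequence with $i_2-i_1, \dots, i_1-i_k \leq m$, then the product $\bar a_{i_1 i_2} \bar a_{i_2 i_3} \cdots \bar a_{i_k i_1}$ lies in $I^{\lceil k/(m+1) \rceil}$. -/
/-- Let `R` be a commutative ring, `I` an ideal, and `abar i j ∈ I`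
whenever `i ≤ j`. If `i₁, ..., i_k` is a cyclic sequence of integers with all cyclic
consecutive differences at most `m`, then the cyclic product
`abar i₁ i₂ ⋯ abar i_k i₁` lies in `I ^ ⌈k/(m+1)⌉` (note `⌈k/(m+1)⌉ = (k+m)/(m+1)`
with natural division). -/
theorem stmt1 (R : Type*) [CommRing R] (I : Ideal R) (m k : ℕ) (hm : 1 ≤ m) (hk : 1 ≤ k)
    (abar : ℤ → ℤ → R) (habar : ∀ x y : ℤ, x ≤ y → abar x y ∈ I)
    (i : Fin k → ℤ)
    (hdiff : ∀ j : Fin k, i ⟨((j : ℕ) + 1) % k, Nat.mod_lt _ hk⟩ - i j ≤ (m : ℤ)) :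
    ∏ j : Fin k, abar (i j) (i ⟨((j : ℕ) + 1) % k, Nat.mod_lt _ hk⟩) ∈ I ^ ((k + m) / (m + 1)) := by
  haveI : NeZero k := ⟨by omega⟩
  set f : Fin k → Fin k := fun j => ⟨((j : ℕ) + 1) % k, Nat.mod_lt _ hk⟩ with hf
  have hfe : ∀ j : Fin k, f j = j + 1 := by
    intro j; ext
    simp [hf, Fin.add_def, Fin.val_one', Nat.add_mod]
  set S : Finset (Fin k) := Finset.univ.filter (fun j => i j ≤ i (f j)) with hS
  -- the cyclic sum of differences is zero
  have hsum0 : ∑ j, (i (f j) - i j) = 0 := by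
    rw [Finset.sum_sub_distrib]
    have h1 : ∑ j, i (f j) = ∑ j, i j := by
      simp only [hfe]
      exact Fintype.sum_equiv (Equiv.addRight 1) _ _ (fun j => rfl)
    rw [h1, sub_self]
  -- bound the number of ascending steps from below
  have hA : k ≤ S.card * (m + 1) := by
    have h1 : ∑ j ∈ S, (i (f j) - i j) ≤ S.card • (m : ℤ) :=
      Finset.sum_le_card_nsmul _ _ _ (fun j _ => hdiff j)
    have h2 : ∑ j ∈ Sᶜ, (i (f j) - i j) ≤ Sᶜ.card • (-1 : ℤ) := by
      apply Finset.sum_le_card_nsmul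
      intro j hj
      simp only [hS, Finset.mem_compl, Finset.mem_filter, Finset.mem_univ, true_and,
        not_le] at hj
      omega
    have hsplit : ∑ j ∈ S, (i (f j) - i j) + ∑ j ∈ Sᶜ, (i (f j) - i j) = 0 := by
      rw [Finset.sum_add_sum_compl]; exact hsum0
    have hcard : S.card + Sᶜ.card = k := by
      simp [Finset.card_add_card_compl S]
    simp only [nsmul_eq_mul] at h1 h2
    have hz : (k : ℤ) ≤ S.card * m + S.card := by omega
    have : (k : ℤ) ≤ S.card * (m + 1) := by linarith
    exact_mod_cast this
  have hdivle : (k + m) / (m + 1) ≤ S.card := by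
    have h1 : (k + m) / (m + 1) ≤ (m + S.card * (m + 1)) / (m + 1) :=
      Nat.div_le_div_right (by omega)
    rw [Nat.add_mul_div_right _ _ (by omega : 0 < m + 1),
      Nat.div_eq_of_lt (show m < m + 1 by omega)] at h1
    omega
  -- the product over ascending steps lies in I ^ S.card
  have hprodS : ∏ j ∈ S, abar (i j) (i (f j)) ∈ I ^ S.card := by
    have hmem : ∀ j ∈ S, abar (i j) (i (f j)) ∈ I := by
      intro j hj
      simp only [hS, Finset.mem_filter, Finset.mem_univ, true_and] at hj
      exact habar _ _ hj
    have := Ideal.prod_mem_prod hmem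
    simpa [Finset.prod_const] using this
  refine Ideal.pow_le_pow_right hdivle ?_
  rw [← Finset.prod_filter_mul_prod_filter_not Finset.univ (fun j => i j ≤ i (f j))]
  exact Ideal.mul_mem_right _ _ hprodS
end

section
/- Formal Weierstrass preparation: let $R$ be a commutative ring complete with respect to an ideal $I$, and let $q(\varepsilon) = \sum_{j \geq 0} q_j \varepsilon^j \in R[[\varepsilon]]$ with $q_0, \dots, q_{n-1} \in I$ and $q_n \equiv 1 \pmod I$. Then there exists a unique factorization $q(\varepsilon) = (\varepsilon^n - w_1 \varepsilon^{n-1} + \cdots + (-1)^n w_n) \, q_{\mathrm{inv}}(\varepsilon)$ with $w_1, \dots, w_n \in I$ and $q_{\mathrm{inv}}$ an invertible power series congruent to $1$ modulo $I + (\varepsilon)$. -/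
open PowerSeries

namespace Stmt5Aux


variable {R : Type*} [CommRing R]

lemma coeff_mul_mem (J K : Ideal R) (f h : PowerSeries R)
    (hf : ∀ j, PowerSeries.coeff j f ∈ J) (hh : ∀ j, PowerSeries.coeff j h ∈ K) (j : ℕ) :
    PowerSeries.coeff j (f * h) ∈ J * K := by
  rw [PowerSeries.coeff_mul]
  exact Ideal.sum_mem _ fun p _ => Ideal.mul_mem_mul (hf p.1) (hh p.2)

lemma coeff_mul_mem_left (J : Ideal R) (f h : PowerSeries R)
    (hf : ∀ j, PowerSeries.coeff j f ∈ J) (j : ℕ) :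
    PowerSeries.coeff j (f * h) ∈ J := by
  simpa [Ideal.mul_top] using coeff_mul_mem J ⊤ f h hf (fun _ => trivial) j

lemma coeff_mul_mem_right (J : Ideal R) (f h : PowerSeries R)
    (hh : ∀ j, PowerSeries.coeff j h ∈ J) (j : ℕ) :
    PowerSeries.coeff j (f * h) ∈ J := by
  rw [mul_comm]; exact coeff_mul_mem_left J h f hh j

/-- shift a power series down by `n`. -/
noncomputable def sh (n : ℕ) (f : PowerSeries R) : PowerSeries R :=
  PowerSeries.mk fun j => PowerSeries.coeff (j + n) f

@[simp] lemma coeff_sh (n j : ℕ) (f : PowerSeries R) :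
    PowerSeries.coeff j (sh n f) = PowerSeries.coeff (j + n) f := by
  simp [sh]

lemma sh_sub (n : ℕ) (f g : PowerSeries R) : sh n (f - g) = sh n f - sh n g := by
  ext j; simp

lemma exists_aux (I : Ideal R) [IsAdicComplete I R] (hI : I ≠ ⊤)
    (n : ℕ) (q : PowerSeries R)
    (h1 : ∀ j < n, PowerSeries.coeff j q ∈ I)
    (h2 : PowerSeries.coeff n q - 1 ∈ I) :
    ∃ G : PowerSeries R, ∃ V : (PowerSeries R)ˣ, (V : PowerSeries R) = G ∧
      (∀ j < n, PowerSeries.coeff j (q * G) ∈ I) ∧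
      PowerSeries.coeff n (q * G) = 1 ∧
      (∀ j, n < j → PowerSeries.coeff j (q * G) = 0) ∧
      PowerSeries.constantCoeff G - 1 ∈ I := by
  -- Q = upper part of q, a unit
  set Q : PowerSeries R := PowerSeries.mk fun j => PowerSeries.coeff (j + n) q with hQdef
  have hQ0 : PowerSeries.constantCoeff Q = PowerSeries.coeff n q := by
    rw [← PowerSeries.coeff_zero_eq_constantCoeff, hQdef, PowerSeries.coeff_mk, zero_add]
  have hQ0unit : IsUnit (PowerSeries.constantCoeff Q) := by
    rw [hQ0]
    exact Ideal.isUnit_of_sub_one_mem_jacobson_bot _ (IsAdicComplete.le_jacobson_bot I h2)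
  have hQunit : IsUnit Q := PowerSeries.isUnit_iff_constantCoeff.mpr hQ0unit
  obtain ⟨U, hU⟩ := hQunit
  -- A = lower part of q
  set A : PowerSeries R := q - X ^ n * Q with hAdef
  have hA_mem : ∀ j, PowerSeries.coeff j A ∈ I := by
    intro j
    rw [hAdef, map_sub, PowerSeries.coeff_X_pow_mul']
    by_cases hj : n ≤ j
    · rw [if_pos hj, hQdef, PowerSeries.coeff_mk, Nat.sub_add_cancel hj, sub_self]
      exact zero_mem _
    · rw [if_neg hj, sub_zero]
      exact h1 j (by omega)
  have hA_hi : ∀ j, n ≤ j → PowerSeries.coeff j A = 0 := by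
    intro j hj
    rw [hAdef, map_sub, PowerSeries.coeff_X_pow_mul', if_pos hj, hQdef, PowerSeries.coeff_mk,
      Nat.sub_add_cancel hj, sub_self]
  -- the iteration
  set g : ℕ → PowerSeries R := fun k =>
    Nat.rec ((↑U⁻¹ : PowerSeries R))
      (fun _ gk => (↑U⁻¹ : PowerSeries R) * (1 - sh n (gk * A))) k with hgdef
  have hg0 : g 0 = (↑U⁻¹ : PowerSeries R) := rfl
  have hgs : ∀ k, g (k + 1) = (↑U⁻¹ : PowerSeries R) * (1 - sh n (g k * A)) := fun _ => rfl
  -- successive differences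
  have key : ∀ k, ∀ j, PowerSeries.coeff j (g (k + 1) - g k) ∈ I ^ (k + 1) := by
    intro k
    induction k with
    | zero =>
      intro j
      show PowerSeries.coeff j (g 1 - g 0) ∈ I ^ 1
      have hrw : g 1 - g 0 = (↑U⁻¹ : PowerSeries R) * (-(sh n (g 0 * A))) := by
        rw [show g 1 = (↑U⁻¹ : PowerSeries R) * (1 - sh n (g 0 * A)) from rfl, hg0]; ring
      rw [hrw, pow_one]
      refine coeff_mul_mem_right I _ _ (fun i => ?_) j
      rw [map_neg, coeff_sh]
      exact neg_mem (coeff_mul_mem_right I _ _ hA_mem _)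
    | succ k ih =>
      intro j
      show PowerSeries.coeff j (g (k + 2) - g (k + 1)) ∈ I ^ (k + 2)
      have hrw : g (k + 2) - g (k + 1)
          = (↑U⁻¹ : PowerSeries R) * (sh n ((g k - g (k + 1)) * A)) := by
        rw [show g (k + 2) = (↑U⁻¹ : PowerSeries R) * (1 - sh n (g (k + 1) * A)) from rfl,
          hgs k, sub_mul, sh_sub]; ring
      rw [hrw]
      refine coeff_mul_mem_right _ _ _ (fun i => ?_) j
      rw [coeff_sh]
      have : PowerSeries.coeff (i + n) ((g k - g (k + 1)) * A) ∈ I ^ (k + 1) * I :=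
        coeff_mul_mem _ _ _ _
          (fun j' => by
            have := neg_mem (ih j'); rwa [← map_neg, neg_sub] at this) hA_mem _
      rwa [← pow_succ] at this
  -- Cauchy and limit, coefficientwise
  have diff : ∀ a c j, PowerSeries.coeff j (g (a + c)) - PowerSeries.coeff j (g a) ∈ I ^ a := by
    intro a c j
    induction c with
    | zero => simpa using zero_mem (I ^ a)
    | succ c ih =>
      have h3 : PowerSeries.coeff j (g (a + c + 1)) - PowerSeries.coeff j (g (a + c))
          ∈ I ^ a := by
        have := key (a + c) j
        rw [map_sub] at this
        exact Ideal.pow_le_pow_right (by omega) this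
      have := add_mem h3 ih
      rw [show a + (c + 1) = a + c + 1 from rfl]
      convert this using 1; ring
  have cauchy : ∀ j, ∀ {a b : ℕ}, a ≤ b →
      PowerSeries.coeff j (g a) ≡ PowerSeries.coeff j (g b)
        [SMOD (I ^ a • ⊤ : Submodule R R)] := by
    intro j a b hab
    rw [SModEq.sub_mem, smul_eq_mul, Ideal.mul_top]
    have := neg_mem (diff a (b - a) j)
    rw [Nat.add_sub_cancel' hab] at this
    simpa using this
  choose L hL using fun j =>
    IsPrecomplete.prec (IsAdicComplete.toIsPrecomplete (I := I) (M := R)) (cauchy j)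
  set G : PowerSeries R := PowerSeries.mk L with hGdef
  have hGk : ∀ j k, PowerSeries.coeff j G - PowerSeries.coeff j (g k) ∈ I ^ k := by
    intro j k
    have := (SModEq.sub_mem.mp (hL j k))
    rw [smul_eq_mul, Ideal.mul_top] at this
    have := neg_mem this
    rw [neg_sub] at this
    simpa [hGdef] using this
  -- the fixed point identity
  have hstep : ∀ k, sh n (g k * A) = 1 - Q * g (k + 1) := by
    intro k
    rw [hgs k, ← mul_assoc, ← hU, U.mul_inv, one_mul]
    ring
  have hfix0 : G * Q - 1 + sh n (G * A) = 0 := by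
    ext j
    rw [map_zero]
    refine IsHausdorff.haus (IsAdicComplete.toIsHausdorff (I := I) (M := R)) _ fun k => ?_
    rw [SModEq.zero, smul_eq_mul, Ideal.mul_top]
    have hsplit : G * Q - 1 + sh n (G * A)
        = (G - g k) * Q + sh n ((G - g k) * A) + Q * (g k - g (k + 1)) := by
      have hh1 : sh n ((G - g k) * A) = sh n (G * A) - sh n (g k * A) := by
        rw [sub_mul, sh_sub]
      have hh2 := hstep k
      linear_combination -hh1 + hh2
    rw [hsplit, map_add, map_add]
    refine add_mem (add_mem ?_ ?_) ?_
    · exact coeff_mul_mem_left (I ^ k) _ _ (fun i => by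
        rw [map_sub]; exact hGk i k) j
    · rw [coeff_sh]
      exact coeff_mul_mem_left (I ^ k) _ _ (fun i => by
        rw [map_sub]; exact hGk i k) _
    · refine coeff_mul_mem_right _ _ _ (fun i => ?_) j
      have := neg_mem (key k i)
      rw [← map_neg, neg_sub] at this
      exact Ideal.pow_le_pow_right (by omega) this
  -- q * G decomposition
  have hqAQ : q = A + X ^ n * Q := by rw [hAdef]; ring
  have hPseq : q * G = G * A + X ^ n * (1 - sh n (G * A)) := by
    have hh1 : G * Q = 1 - sh n (G * A) := by linear_combination hfix0
    calc q * G = G * A + X ^ n * (G * Q) := by rw [hqAQ]; ring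
    _ = _ := by rw [hh1]
  have hco : ∀ j, PowerSeries.coeff j (q * G) = PowerSeries.coeff j (G * A)
      + (if n ≤ j then PowerSeries.coeff (j - n) (1 - sh n (G * A)) else 0) := by
    intro j
    rw [hPseq, map_add, PowerSeries.coeff_X_pow_mul']
  -- G is a unit
  have hGA_mem : ∀ j, PowerSeries.coeff j (G * A) ∈ I :=
    fun j => coeff_mul_mem_right I _ _ hA_mem j
  have hG0 : PowerSeries.constantCoeff G * PowerSeries.constantCoeff Q
      = 1 - PowerSeries.coeff n (G * A) := by
    have := congrArg (PowerSeries.constantCoeff) hfix0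
    simp only [map_add, map_sub, map_mul, map_one, map_zero] at this
    have hc : PowerSeries.constantCoeff (sh n (G * A)) = PowerSeries.coeff n (G * A) := by
      rw [← PowerSeries.coeff_zero_eq_constantCoeff, coeff_sh, zero_add]
    rw [hc] at this
    linear_combination this
  have hG0I : PowerSeries.constantCoeff G - 1 ∈ I := by
    -- G₀ - 1 = G₀(1 - Q₀) + (G₀Q₀ - 1)
    have m1 : PowerSeries.constantCoeff G * PowerSeries.constantCoeff Q - 1 ∈ I := by
      rw [hG0]; simpa using neg_mem (hGA_mem n)
    have m2 : PowerSeries.constantCoeff Q - 1 ∈ I := by rw [hQ0]; exact h2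
    have := sub_mem m1 (Ideal.mul_mem_left _ (PowerSeries.constantCoeff G) m2)
    convert this using 1; ring
  have hG0unit : IsUnit (PowerSeries.constantCoeff G) :=
    Ideal.isUnit_of_sub_one_mem_jacobson_bot _ (IsAdicComplete.le_jacobson_bot I hG0I)
  obtain ⟨V, hV⟩ := PowerSeries.isUnit_iff_constantCoeff.mpr hG0unit
  refine ⟨G, V, hV, ?_, ?_, ?_, hG0I⟩
  · intro j hj
    rw [hco j, if_neg (by omega), add_zero]
    exact hGA_mem j
  · rw [hco n, if_pos le_rfl, Nat.sub_self, map_sub, PowerSeries.coeff_zero_eq_constantCoeff,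
      map_one]
    have hc : PowerSeries.constantCoeff (sh n (G * A)) = PowerSeries.coeff n (G * A) := by
      rw [← PowerSeries.coeff_zero_eq_constantCoeff, coeff_sh, zero_add]
    rw [hc]; ring
  · intro j hj
    rw [hco j, if_pos (by omega), map_sub, coeff_sh, Nat.sub_add_cancel (by omega : n ≤ j),
      PowerSeries.coeff_one, if_neg (by omega)]
    ring


lemma unique_aux (I : Ideal R) [IsAdicComplete I R] (n : ℕ) (q : PowerSeries R)
    (P P' : Polynomial R) (u u' : (PowerSeries R)ˣ)
    (hPm : P.Monic) (hPd : P.natDegree = n) (hPc : ∀ i < n, P.coeff i ∈ I)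
    (hPm' : P'.Monic) (hPd' : P'.natDegree = n) (hPc' : ∀ i < n, P'.coeff i ∈ I)
    (hq : q = ↑P * (u : PowerSeries R)) (hq' : q = ↑P' * (u' : PowerSeries R)) :
    P = P' ∧ u = u' := by
  set d : PowerSeries R := (↑P' : PowerSeries R) - ↑P with hd_def
  set e : PowerSeries R := (↑u' : PowerSeries R) - ↑u with he_def
  set B : PowerSeries R := (↑P' : PowerSeries R) - X ^ n with hB_def
  -- coefficient facts
  have hd_hi : ∀ j, n ≤ j → PowerSeries.coeff j d = 0 := by
    intro j hj
    rcases eq_or_lt_of_le hj with rfl | hj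
    · have h1 : P.coeff n = 1 := by rw [← hPd]; exact hPm.coeff_natDegree
      have h2 : P'.coeff n = 1 := by rw [← hPd']; exact hPm'.coeff_natDegree
      simp [hd_def, Polynomial.coeff_coe, h1, h2]
    · simp [hd_def, Polynomial.coeff_coe,
        Polynomial.coeff_eq_zero_of_natDegree_lt (hPd ▸ hj),
        Polynomial.coeff_eq_zero_of_natDegree_lt (hPd' ▸ hj)]
  have hB : ∀ j, PowerSeries.coeff j B ∈ I := by
    intro j
    rcases lt_trichotomy j n with hj | rfl | hj
    · simpa [hB_def, Polynomial.coeff_coe, PowerSeries.coeff_X_pow, hj.ne] using hPc' j hj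
    · have : P'.coeff j = 1 := by
        have := hPm'.coeff_natDegree; rwa [hPd'] at this
      simp [hB_def, Polynomial.coeff_coe, PowerSeries.coeff_X_pow, this]
    · simp [hB_def, Polynomial.coeff_coe, PowerSeries.coeff_X_pow, hj.ne',
        Polynomial.coeff_eq_zero_of_natDegree_lt (hPd' ▸ hj)]
  -- the key relation
  have hrel : d * (↑u : PowerSeries R) + (↑P' : PowerSeries R) * e = 0 := by
    have h := hq.symm.trans hq'
    rw [hd_def, he_def]
    linear_combination -h
  have hP'e : (↑P' : PowerSeries R) * e = X ^ n * e + B * e := by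
    rw [hB_def]; ring
  have h0 : X ^ n * e = -(d * (↑u : PowerSeries R)) - B * e := by
    linear_combination hrel - hP'e
  -- u₀ is a unit
  obtain ⟨v, hv⟩ := PowerSeries.isUnit_constantCoeff (u : PowerSeries R) u.isUnit
  -- MAIN INDUCTION
  have main : ∀ k : ℕ, ∀ j, PowerSeries.coeff j e ∈ I ^ k := by
    intro k
    induction k with
    | zero => intro j; simp
    | succ k ih =>
      -- first: coefficients of d lie in I ^ (k+1)
      have hd : ∀ j, PowerSeries.coeff j d ∈ I ^ (k + 1) := by
        intro j
        induction j using Nat.strong_induction_on with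
        | _ j ihj =>
          by_cases hj : n ≤ j
          · rw [hd_hi j hj]; exact zero_mem _
          push_neg at hj
          have hdu : PowerSeries.coeff j (d * (↑u : PowerSeries R)) ∈ I ^ (k + 1) := by
            have h0' : d * (↑u : PowerSeries R) = -(X ^ n * e) - B * e := by
              linear_combination hrel - hP'e
            rw [h0', map_sub, map_neg, PowerSeries.coeff_X_pow_mul', if_neg (by omega)]
            have : PowerSeries.coeff j (B * e) ∈ I * I ^ k :=
              coeff_mul_mem I (I ^ k) B e hB ih j
            rw [← pow_succ' I k] at this
            simpa using this
          -- peel off the top term of the convolution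
          rw [PowerSeries.coeff_mul] at hdu
          have hmem : ((j, 0) : ℕ × ℕ) ∈ Finset.HasAntidiagonal.antidiagonal j := by simp
          rw [← Finset.add_sum_erase _ _ hmem] at hdu
          have hrest : ∑ p ∈ (Finset.HasAntidiagonal.antidiagonal j).erase (j, 0),
              PowerSeries.coeff p.1 d * PowerSeries.coeff p.2 (↑u : PowerSeries R)
              ∈ I ^ (k + 1) := by
            refine Ideal.sum_mem _ fun p hp => ?_
            have hp1 : p.1 < j := by
              rcases Finset.mem_erase.mp hp with ⟨hne, hp⟩
              rw [Finset.HasAntidiagonal.mem_antidiagonal] at hp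
              rcases lt_or_eq_of_le (Nat.le.intro hp) with h | h
              · exact h
              · exact absurd (Prod.ext h (by omega)) hne
            exact Ideal.mul_mem_right _ _ (ihj p.1 hp1)
          have htop : PowerSeries.coeff j d * PowerSeries.coeff 0 (↑u : PowerSeries R)
              ∈ I ^ (k + 1) := by
            have := Ideal.sub_mem _ hdu hrest; simpa using this
          -- divide by the unit u₀
          have : PowerSeries.coeff j d * PowerSeries.coeff 0 (↑u : PowerSeries R) * ↑v⁻¹
              ∈ I ^ (k + 1) := Ideal.mul_mem_right _ _ htop
          rwa [PowerSeries.coeff_zero_eq_constantCoeff, ← hv, Units.mul_inv_cancel_right]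
            at this
      -- now: coefficients of e lie in I ^ (k+1)
      intro j
      have : PowerSeries.coeff (j + n) (X ^ n * e) ∈ I ^ (k + 1) := by
        rw [h0, map_sub, map_neg]
        have h1 : PowerSeries.coeff (j + n) (d * (↑u : PowerSeries R)) ∈ I ^ (k + 1) :=
          coeff_mul_mem_left _ _ _ hd _
        have h2 : PowerSeries.coeff (j + n) (B * e) ∈ I ^ (k + 1) := by
          have : PowerSeries.coeff (j + n) (B * e) ∈ I * I ^ k :=
            coeff_mul_mem I (I ^ k) B e hB ih _
          rwa [← pow_succ' I k] at this
        exact Ideal.sub_mem _ (neg_mem h1) h2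
      rwa [PowerSeries.coeff_X_pow_mul] at this
  -- conclude e = 0 by Hausdorff separation
  have he0 : e = 0 := by
    ext j
    rw [map_zero]
    refine IsHausdorff.haus (IsAdicComplete.toIsHausdorff (I := I) (M := R)) _ fun k => ?_
    rw [SModEq.zero, smul_eq_mul, Ideal.mul_top]
    exact main k j
  have hd0 : d = 0 := by
    have h1 : d * (↑u : PowerSeries R) = 0 := by
      rw [he0] at hrel; simpa using hrel
    have h2 : d * ((↑u : PowerSeries R) * ((↑u⁻¹ : (PowerSeries R)ˣ) : PowerSeries R)) = 0 := by
      rw [← mul_assoc, h1, zero_mul]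
    simpa [← Units.val_mul] using h2
  constructor
  · have : (↑P : PowerSeries R) = ↑P' := by
      have := sub_eq_zero.mp hd0; rw [this]
    exact_mod_cast (Polynomial.coe_inj.mp this)
  · ext1
    exact (sub_eq_zero.mp he0).symm


end Stmt5Aux

/-- formal Weierstrass preparation: let `R` be a commutative ring complete
with respect to an ideal `I`, and let `q = ∑ q_j ε^j ∈ R[[ε]]` with `q_0, …, q_{n-1} ∈ I`
and `q_n ≡ 1 mod I`. Then there is a unique factorization `q = P * u` where `P` is a monic
polynomial of degree `n` whose lower coefficients lie in `I` (the Weierstrass polynomial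
`ε^n - w_1 ε^{n-1} + ⋯ + (-1)^n w_n`, `w_i ∈ I`) and `u` is an invertible power series
congruent to `1` modulo `I + (ε)`. -/
theorem stmt5 (R : Type*) [CommRing R] (I : Ideal R) [IsAdicComplete I R] (hI : I ≠ ⊤)
    (n : ℕ) (q : PowerSeries R)
    (h1 : ∀ j < n, PowerSeries.coeff j q ∈ I)
    (h2 : PowerSeries.coeff n q - 1 ∈ I) :
    ∃! Pu : Polynomial R × (PowerSeries R)ˣ,
      Pu.1.Monic ∧ Pu.1.natDegree = n ∧ (∀ i < n, Pu.1.coeff i ∈ I) ∧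
      PowerSeries.constantCoeff (Pu.2 : PowerSeries R) - 1 ∈ I ∧
      q = (Pu.1 : PowerSeries R) * (Pu.2 : PowerSeries R) := by
  obtain ⟨G, V, hV, hlt, hn, hgt, hG0I⟩ := Stmt5Aux.exists_aux I hI n q h1 h2
  haveI : Nontrivial R := by
    rcases subsingleton_or_nontrivial R with h | h
    · exact absurd (Subsingleton.elim I ⊤) hI
    · exact h
  set P : Polynomial R := PowerSeries.trunc (n + 1) (q * G) with hPdef
  have hPcoe : (↑P : PowerSeries R) = q * G := by
    ext j
    rw [Polynomial.coeff_coe, hPdef, PowerSeries.coeff_trunc]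
    split_ifs with h
    · rfl
    · exact (hgt j (by omega)).symm
  have hPn : P.coeff n = 1 := by
    rw [hPdef, PowerSeries.coeff_trunc, if_pos (by omega)]; exact hn
  have hPhi : ∀ m, n < m → P.coeff m = 0 := by
    intro m hm
    rw [hPdef, PowerSeries.coeff_trunc]
    split_ifs with h
    · exact hgt m hm
    · rfl
  have hdeg : P.natDegree = n := by
    apply le_antisymm
    · exact Polynomial.natDegree_le_iff_coeff_eq_zero.mpr hPhi
    · exact Polynomial.le_natDegree_of_ne_zero (hPn ▸ one_ne_zero)
  have hmonic : P.Monic := by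
    rw [Polynomial.Monic, Polynomial.leadingCoeff, hdeg]; exact hPn
  have hlow : ∀ i < n, P.coeff i ∈ I := by
    intro i hi
    rw [hPdef, PowerSeries.coeff_trunc, if_pos (by omega)]
    exact hlt i hi
  have hmul : PowerSeries.constantCoeff ((↑V⁻¹ : (PowerSeries R)ˣ) : PowerSeries R)
      * PowerSeries.constantCoeff G = 1 := by
    rw [← hV, ← map_mul, ← Units.val_mul, inv_mul_cancel, Units.val_one, map_one]
  have hu0 : PowerSeries.constantCoeff ((↑V⁻¹ : (PowerSeries R)ˣ) : PowerSeries R) - 1 ∈ I := by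
    have heq : PowerSeries.constantCoeff ((↑V⁻¹ : (PowerSeries R)ˣ) : PowerSeries R) - 1
        = -(PowerSeries.constantCoeff ((↑V⁻¹ : (PowerSeries R)ˣ) : PowerSeries R)
            * (PowerSeries.constantCoeff G - 1)) := by
      linear_combination hmul
    rw [heq]
    exact neg_mem (Ideal.mul_mem_left _ _ hG0I)
  have hfac : q = (↑P : PowerSeries R) * ((↑V⁻¹ : (PowerSeries R)ˣ) : PowerSeries R) := by
    rw [hPcoe, ← hV, mul_assoc, V.mul_inv, mul_one]
  refine ⟨(P, V⁻¹), ⟨hmonic, hdeg, hlow, hu0, hfac⟩, ?_⟩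
  rintro ⟨P₂, u₂⟩ ⟨hm2, hd2, hc2, _, hf2⟩
  obtain ⟨hPeq, hueq⟩ :=
    Stmt5Aux.unique_aux I n q P₂ P u₂ V⁻¹ hm2 hd2 hc2 hmonic hdeg hlow hf2 hfac
  exact Prod.ext hPeq hueq
end
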